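/- arXiv:1308.0310 — 4 statements merged into one kernel-verified Lean document; each statement's English description precedes it below -/
import Mathlib

section
/- Let μ be a Lévy measure on ℝⁿ and let l ∈ ℝⁿ be a unit vector. Define q^U(rl) = ∫ ((rl·u)² ∧ 1) μ(du) and q^L(rl) = ∫_{|r l·u| ≤ 1} (r l·u)² μ(du) for r > 0. Then for all 0 < r₁ < r₂, q^U(r₂ l) − q^U(r₁ l) = ∫_{r₁}^{r₂} (2 q^L(u l)/u) du. -/
open MeasureTheory Real
open scoped RealInnerProductSpace ENNReal

/-!
For fixed `s`, the map `r ↦ min ((r * s) ^ 2) 1` is continuous and differentiable off the two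
points `|r * s| = 1`, with derivative `2 r s² 1_{|r s| ≤ 1}`; the fundamental theorem of calculus
with countably many exceptional points gives the identity pointwise in `s = ⟪l, u⟫`. Integrating
in `u` and swapping the two integrals yields the theorem. Fubini applies because the integrand is
nonnegative for `r ≥ 0` and, by the pointwise identity, its `r`-integral is the `μ`-integrable
difference `min ((r₂ s)²) 1 - min ((r₁ s)²) 1`.
-/

open Set
open scoped Interval

/-- The value on `|r * s| = 1` is immaterial (a null set of `r`); `≤` matches the truncation
`{|r ⟪l, u⟫| ≤ 1}` in `q^L`. -/
noncomputable def truncSqDeriv (s r : ℝ) : ℝ := if |r * s| ≤ 1 then 2 * r * s ^ 2 else 0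

lemma measurable_truncSqDeriv : Measurable (Function.uncurry truncSqDeriv) :=
  Measurable.ite (measurableSet_le (by fun_prop) measurable_const) (by fun_prop) measurable_const

lemma truncSqDeriv_nonneg (s : ℝ) {r : ℝ} (hr : 0 ≤ r) : 0 ≤ truncSqDeriv s r := by
  unfold truncSqDeriv; split_ifs <;> positivity

lemma hasDerivAt_min_sq_one (s : ℝ) {r : ℝ} (hr : |r * s| ≠ 1) :
    HasDerivAt (fun r ↦ min ((r * s) ^ 2) 1) (truncSqDeriv s r) r := by
  have hcont : Continuous fun r : ℝ ↦ |r * s| := by fun_prop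
  rcases hr.lt_or_gt with hlt | hgt
  · have hderiv : HasDerivAt (fun r ↦ (r * s) ^ 2) (2 * r * s ^ 2) r :=
      ((hasDerivAt_id' r).mul_const s).pow 2 |>.congr_deriv (by ring)
    rw [truncSqDeriv, if_pos hlt.le]
    refine hderiv.congr_of_eventuallyEq ?_
    filter_upwards [hcont.continuousAt.eventually_lt continuousAt_const hlt] with y hy
    exact min_eq_left ((sq_le_one_iff_abs_le_one _).2 hy.le)
  · rw [truncSqDeriv, if_neg hgt.not_ge]
    refine (hasDerivAt_const r (1 : ℝ)).congr_of_eventuallyEq ?_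
    filter_upwards [continuousAt_const.eventually_lt hcont.continuousAt hgt] with y hy
    exact min_eq_right ((one_le_sq_iff_one_le_abs _).2 hy.le)

lemma intervalIntegrable_truncSqDeriv (s a b : ℝ) :
    IntervalIntegrable (truncSqDeriv s) volume a b := by
  refine (continuous_mul_const (2 * s ^ 2)).intervalIntegrable a b |>.mono_fun
    (measurable_truncSqDeriv.comp measurable_prodMk_left).aestronglyMeasurable
    (ae_of_all _ fun r ↦ ?_)
  dsimp only [truncSqDeriv]
  split_ifs
  · exact (congrArg norm (by ring)).le
  · rw [norm_zero]; positivity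

lemma integral_truncSqDeriv (s a b : ℝ) :
    ∫ r in a..b, truncSqDeriv s r = min ((b * s) ^ 2) 1 - min ((a * s) ^ 2) 1 := by
  refine integral_eq_of_hasDerivAt_off_countable _ _ (s := {r | |r * s| = 1}) ?_ (by fun_prop)
    (fun r hr ↦ hasDerivAt_min_sq_one s hr.2) (intervalIntegrable_truncSqDeriv s a b)
  refine ((toFinite {1 / s, -1 / s}).subset fun r (hr : |r * s| = 1) ↦ ?_).countable
  have hs : s ≠ 0 := by rintro rfl; simp at hr
  rcases abs_eq (zero_le_one' ℝ) |>.1 hr with h | h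
  · left; rw [eq_div_iff hs, h]
  · right; rw [mem_singleton_iff, eq_div_iff hs, h]

lemma min_mul_sq_one_le (r s : ℝ) : min ((r * s) ^ 2) 1 ≤ max (r ^ 2) 1 * min (s ^ 2) 1 := by
  rcases le_total (s ^ 2) 1 with h | h
  · rw [min_eq_left h, mul_pow]
    exact (min_le_left _ _).trans (by gcongr; exact le_max_left _ _)
  · rw [min_eq_right h, mul_one]
    exact (min_le_right _ _).trans (le_max_right _ _)

section

variable {α : Type*} [MeasurableSpace α] {μ : Measure α} {f : α → ℝ}

lemma MeasureTheory.Integrable.min_mul_sq_one (hf : Measurable f)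
    (hw : Integrable (fun x ↦ min (f x ^ 2) 1) μ) (r : ℝ) :
    Integrable (fun x ↦ min ((r * f x) ^ 2) 1) μ := by
  refine (hw.const_mul (max (r ^ 2) 1)).mono' (by fun_prop) (ae_of_all _ fun x ↦ ?_)
  rw [norm_of_nonneg (by positivity)]
  exact min_mul_sq_one_le r (f x)

lemma integrable_truncSqDeriv_prod [SFinite μ] (hf : Measurable f)
    (hw : Integrable (fun x ↦ min (f x ^ 2) 1) μ) {r₁ r₂ : ℝ} (h₁ : 0 ≤ r₁) (h₁₂ : r₁ ≤ r₂) :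
    Integrable (Function.uncurry fun r x ↦ truncSqDeriv (f x) r)
      ((volume.restrict (Ι r₁ r₂)).prod μ) := by
  have hmeas : Measurable (Function.uncurry fun r x ↦ truncSqDeriv (f x) r) :=
    measurable_truncSqDeriv.comp ((hf.comp measurable_snd).prodMk measurable_fst)
  rw [uIoc_of_le h₁₂, integrable_prod_iff' hmeas.aestronglyMeasurable]
  refine ⟨ae_of_all _ fun x ↦ (intervalIntegrable_truncSqDeriv (f x) r₁ r₂).1, ?_⟩
  refine ((hw.min_mul_sq_one hf r₂).sub (hw.min_mul_sq_one hf r₁)).congr (ae_of_all _ fun x ↦ ?_)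
  simp only [Pi.sub_apply, Function.uncurry_apply_pair]
  rw [← integral_truncSqDeriv, intervalIntegral.integral_of_le h₁₂]
  refine setIntegral_congr_fun measurableSet_Ioc fun r hr ↦ ?_
  exact (norm_of_nonneg (truncSqDeriv_nonneg _ (h₁.trans hr.1.le))).symm

lemma integral_min_mul_sq_one_sub_of_sFinite [SFinite μ] (hf : Measurable f)
    (hw : Integrable (fun x ↦ min (f x ^ 2) 1) μ) {r₁ r₂ : ℝ} (h₁ : 0 ≤ r₁) (h₁₂ : r₁ ≤ r₂) :
    (∫ x, min ((r₂ * f x) ^ 2) 1 ∂μ) - ∫ x, min ((r₁ * f x) ^ 2) 1 ∂μ =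
      ∫ r in r₁..r₂, ∫ x, truncSqDeriv (f x) r ∂μ := by
  rw [← integral_sub (hw.min_mul_sq_one hf r₂) (hw.min_mul_sq_one hf r₁),
    intervalIntegral_integral_swap (integrable_truncSqDeriv_prod hf hw h₁ h₁₂)]
  simp_rw [integral_truncSqDeriv]

lemma integral_truncSqDeriv_eq_mul_setIntegral (hf : Measurable f) {r : ℝ} (hr : r ≠ 0) :
    ∫ x, truncSqDeriv (f x) r ∂μ = 2 / r * ∫ x in {x | |r * f x| ≤ 1}, (r * f x) ^ 2 ∂μ := by
  rw [← integral_const_mul, ← integral_indicator (measurableSet_le (by fun_prop) measurable_const)]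
  congr 1 with x
  simp only [truncSqDeriv, indicator, mem_ofPred_eq]
  split_ifs
  · field_simp
  · rfl

theorem integral_min_mul_sq_one_sub (hf : Measurable f)
    (hw : Integrable (fun x ↦ min (f x ^ 2) 1) μ) {r₁ r₂ : ℝ} (h₁ : 0 < r₁) (h₁₂ : r₁ ≤ r₂) :
    (∫ x, min ((r₂ * f x) ^ 2) 1 ∂μ) - ∫ x, min ((r₁ * f x) ^ 2) 1 ∂μ =
      ∫ r in r₁..r₂, 2 / r * ∫ x in {x | |r * f x| ≤ 1}, (r * f x) ^ 2 ∂μ := by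
  -- `μ` itself need not be s-finite, but the integrable `min (f ^ 2) 1` is carried by a
  -- σ-finite set `S`, and all integrands vanish where `f` does.
  obtain ⟨S, hS, hwS, hσ⟩ := hw.aefinStronglyMeasurable.exists_set_sigmaFinite
  have hrestrict (g : ℝ → ℝ) (hg : g 0 = 0) : ∫ x, g (f x) ∂μ = ∫ x in S, g (f x) ∂μ := by
    refine (setIntegral_eq_integral_of_ae_compl_eq_zero ?_).symm
    filter_upwards [(ae_restrict_iff' hS.compl).1 hwS] with x hx hxS
    have hw0 : min (f x ^ 2) 1 = 0 := hx hxS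
    have hfx : f x = 0 := by
      contrapose! hw0
      positivity
    rw [hfx, hg]
  rw [hrestrict (fun t ↦ min ((r₂ * t) ^ 2) 1) (by simp),
    hrestrict (fun t ↦ min ((r₁ * t) ^ 2) 1) (by simp),
    integral_min_mul_sq_one_sub_of_sFinite hf hw.restrict h₁.le h₁₂]
  refine intervalIntegral.integral_congr fun r hr ↦ ?_
  have hr0 : r ≠ 0 := (h₁.trans_le (uIcc_of_le h₁₂ ▸ hr).1).ne'
  rw [← integral_truncSqDeriv_eq_mul_setIntegral hf hr0,
    hrestrict (truncSqDeriv · r) (by simp [truncSqDeriv])]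

end

lemma integrable_min_inner_sq_one {E : Type*} [NormedAddCommGroup E] [InnerProductSpace ℝ E]
    [MeasurableSpace E] [OpensMeasurableSpace E] {μ : Measure E}
    (hlevy : ∫⁻ u, ENNReal.ofReal (min (‖u‖ ^ 2) 1) ∂μ < ∞) {l : E} (hl : ‖l‖ ≤ 1) :
    Integrable (fun u ↦ min (⟪l, u⟫ ^ 2) 1) μ := by
  have hnorm : Integrable (fun u ↦ min (‖u‖ ^ 2) 1) μ :=
    ⟨by fun_prop, (hasFiniteIntegral_iff_ofReal (ae_of_all _ fun u ↦ by positivity)).2 hlevy⟩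
  refine hnorm.mono' (by fun_prop) (ae_of_all _ fun u ↦ ?_)
  rw [norm_of_nonneg (by positivity)]
  refine min_le_min_right 1 (sq_le_sq.2 ?_)
  rw [abs_norm]
  exact (abs_real_inner_le_norm l u).trans (mul_le_of_le_one_left (norm_nonneg u) hl)

theorem stmt1_general {n : ℕ} (μ : Measure (EuclideanSpace ℝ (Fin n)))
    (hlevy : ∫⁻ u, ENNReal.ofReal (min (‖u‖ ^ 2) 1) ∂μ < ∞)
    (l : EuclideanSpace ℝ (Fin n)) (hl : ‖l‖ = 1)
    (r₁ r₂ : ℝ) (h₁ : 0 < r₁) (h₁₂ : r₁ < r₂) :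
    (∫ u, min ((r₂ * ⟪l, u⟫) ^ 2) 1 ∂μ) - (∫ u, min ((r₁ * ⟪l, u⟫) ^ 2) 1 ∂μ)
      = ∫ r in r₁..r₂, (2 / r) * ∫ u in {u | |r * ⟪l, u⟫| ≤ 1}, (r * ⟪l, u⟫) ^ 2 ∂μ :=
  integral_min_mul_sq_one_sub (by fun_prop) (integrable_min_inner_sq_one hlevy hl.le) h₁ h₁₂.le

/-- For a Lévy measure `μ` on `ℝⁿ` and a unit vector `l`,
with `q^U(rl) = ∫ ((r⟪l,u⟫)² ∧ 1) dμ` and `q^L(rl) = ∫_{|r⟪l,u⟫| ≤ 1} (r⟪l,u⟫)² dμ`,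
for all `0 < r₁ < r₂` one has
`q^U(r₂ l) − q^U(r₁ l) = ∫_{r₁}^{r₂} (2 q^L(r l) / r) dr`. -/
theorem stmt1 {n : ℕ} (μ : Measure (EuclideanSpace ℝ (Fin n)))
    (hzero : μ {0} = 0)
    (hlevy : ∫⁻ u, ENNReal.ofReal (min (‖u‖ ^ 2) 1) ∂μ < ∞)
    (l : EuclideanSpace ℝ (Fin n)) (hl : ‖l‖ = 1)
    (r₁ r₂ : ℝ) (h₁ : 0 < r₁) (h₁₂ : r₁ < r₂) :
    (∫ u, min ((r₂ * ⟪l, u⟫) ^ 2) 1 ∂μ) - (∫ u, min ((r₁ * ⟪l, u⟫) ^ 2) 1 ∂μ)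
      = ∫ r in r₁..r₂, (2 / r) * ∫ u in {u | |r * ⟪l, u⟫| ≤ 1}, (r * ⟪l, u⟫) ^ 2 ∂μ :=
  stmt1_general μ hlevy l hl r₁ r₂ h₁ h₁₂
end

section
/- Let μ be a Lévy measure on ℝⁿ, t ∈ (0,1], 0 < γ < α, ρ_t ≥ 1 with t·q*(ρ_t) = 1, and suppose ∫_1^{ρ_t} q*(r)/r^{1+γ} dr ≤ K q*(ρ_t)/ρ_t^γ and μ{‖u‖ ≥ 1} ≤ M and ρ_t ≤ c t^{−1/α}. Then t ρ_t^γ ∫_{ρ_t‖u‖ ≥ 1} (‖u‖^γ ∧ 1) μ(du) ≤ C for a constant C depending only on γ, K, M, c, α, uniformly in t ∈ (0,1]. -/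
/-!
For `ρ ‖u‖ ≥ 1` the layer-cake identity
`min (‖u‖^γ) 1 = ρ^(-γ) + γ ∫_1^ρ 1{r ‖u‖ ≥ 1} r^(-1-γ) dr` and Tonelli give
`∫_{ρ‖u‖ ≥ 1} min (‖u‖^γ) 1 dμ ≤ ρ^(-γ) μ{ρ‖u‖ ≥ 1} + γ ∫_1^ρ μ{r‖u‖ ≥ 1} r^(-1-γ) dr`.
Testing `q*` against the coordinate directions bounds the tails: `μ{r‖u‖ ≥ 1} ≤ n q*(r)`.
With the integral comparison hypothesis the right-hand side is at most
`n (1 + γ K) q*(ρ) ρ^(-γ)`, and `t q*(ρ) = 1` turns the claim into `≤ n (1 + γ K)`.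
-/

open MeasureTheory Real Set
open scoped RealInnerProductSpace ENNReal

theorem lintegral_Ioc_rpow_neg_one_sub {γ a b : ℝ} (hγ : 0 < γ) (ha : 0 < a) (hab : a ≤ b) :
    ∫⁻ r in Ioc a b, ENNReal.ofReal (r ^ (-1 - γ)) =
      ENNReal.ofReal ((a ^ (-γ) - b ^ (-γ)) / γ) := by
  have h0 : (0 : ℝ) ∉ uIcc a b := by
    rw [uIcc_of_le hab]; exact fun h => ha.not_ge h.1
  have hint : IntegrableOn (fun r : ℝ => r ^ (-1 - γ)) (Ioc a b) :=
    (intervalIntegrable_iff_integrableOn_Ioc_of_le hab).mp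
      (intervalIntegral.intervalIntegrable_rpow (Or.inr h0))
  rw [← ofReal_integral_eq_lintegral_ofReal hint
    ((ae_restrict_iff' measurableSet_Ioc).mpr
      (ae_of_all _ fun r hr => rpow_nonneg (ha.trans hr.1).le _)),
    ← intervalIntegral.integral_of_le hab,
    integral_rpow (Or.inr ⟨by linarith, h0⟩)]
  congr 1
  rw [show -1 - γ + 1 = -γ by ring]
  field_simp
  ring

theorem ofReal_min_rpow_one_le {γ ρ x : ℝ} (hγ : 0 < γ) (hρ : 1 ≤ ρ) (hx : 1 ≤ ρ * x) :
    ENNReal.ofReal (min (x ^ γ) 1) ≤ ENNReal.ofReal (ρ ^ (-γ)) + ENNReal.ofReal γ *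
      ∫⁻ r in Ioc 1 ρ, {r | 1 ≤ r * x}.indicator (fun r => ENNReal.ofReal (r ^ (-1 - γ))) r := by
  have hx0 : 0 < x := pos_of_mul_pos_right (one_pos.trans_le hx) (by linarith)
  set a := max 1 x⁻¹
  have ha : 1 ≤ a := le_max_left _ _
  have haρ : a ≤ ρ := max_le hρ ((inv_le_iff_one_le_mul₀ hx0).mpr (by linarith))
  have ha_rpow : a ^ (-γ) = min (x ^ γ) 1 := by
    show (max 1 x⁻¹) ^ (-γ) = _
    rcases le_total x 1 with h | h
    · rw [max_eq_right (one_le_inv₀ hx0 |>.mpr h), inv_rpow hx0.le, rpow_neg hx0.le, inv_inv,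
        min_eq_left (rpow_le_one hx0.le h hγ.le)]
    · rw [max_eq_left (inv_le_one_of_one_le₀ h), one_rpow, min_eq_right (one_le_rpow h hγ.le)]
  have htail : ENNReal.ofReal ((a ^ (-γ) - ρ ^ (-γ)) / γ) ≤
      ∫⁻ r in Ioc 1 ρ, {r | 1 ≤ r * x}.indicator (fun r => ENNReal.ofReal (r ^ (-1 - γ))) r := by
    rw [← lintegral_Ioc_rpow_neg_one_sub hγ (one_pos.trans_le ha) haρ]
    calc ∫⁻ r in Ioc a ρ, ENNReal.ofReal (r ^ (-1 - γ))
        = ∫⁻ r in Ioc a ρ,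
            {r | 1 ≤ r * x}.indicator (fun r => ENNReal.ofReal (r ^ (-1 - γ))) r := by
          refine setLIntegral_congr_fun measurableSet_Ioc fun r hr => ?_
          have : x⁻¹ < r := (le_max_right _ _).trans_lt hr.1
          have hrx : 1 ≤ r * x := by
            rw [← inv_mul_cancel₀ hx0.ne']; exact mul_le_mul_of_nonneg_right this.le hx0.le
          exact (indicator_of_mem (s := {r | 1 ≤ r * x}) hrx
            (fun r => ENNReal.ofReal (r ^ (-1 - γ)))).symm
      _ ≤ _ := lintegral_mono_set (Ioc_subset_Ioc_left ha)
  calc ENNReal.ofReal (min (x ^ γ) 1)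
      = ENNReal.ofReal (ρ ^ (-γ) + γ * ((a ^ (-γ) - ρ ^ (-γ)) / γ)) := by
        rw [mul_div_cancel₀ _ hγ.ne', ha_rpow]; ring_nf
    _ ≤ ENNReal.ofReal (ρ ^ (-γ)) +
          ENNReal.ofReal γ * ENNReal.ofReal ((a ^ (-γ) - ρ ^ (-γ)) / γ) := by
        rw [← ENNReal.ofReal_mul hγ.le]; exact ENNReal.ofReal_add_le
    _ ≤ _ := by gcongr

theorem setLIntegral_min_rpow_one_le {X : Type*} [MeasurableSpace X] (μ : Measure X)
    {f : X → ℝ} (hf : Measurable f) {γ ρ : ℝ} (hγ : 0 < γ) (hρ : 1 ≤ ρ) :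
    ∫⁻ x in {x | 1 ≤ ρ * f x}, ENNReal.ofReal (min (f x ^ γ) 1) ∂μ ≤
      ENNReal.ofReal (ρ ^ (-γ)) * μ {x | 1 ≤ ρ * f x} + ENNReal.ofReal γ *
        ∫⁻ r in Ioc 1 ρ, ENNReal.ofReal (r ^ (-1 - γ)) * μ {x | 1 ≤ r * f x} := by
  set S := {x | 1 ≤ ρ * f x}
  -- Tonelli needs s-finiteness: `μ.restrict S` is finite unless the bound is trivial.
  by_cases hS : μ S = ∞
  · rw [hS, ENNReal.mul_top (by simpa using rpow_pos_of_pos (by linarith) _)]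
    simp
  have : IsFiniteMeasure (μ.restrict S) := isFiniteMeasure_restrict.mpr hS
  set k : X → ℝ → ℝ≥0∞ := fun x r =>
    {r | 1 ≤ r * f x}.indicator (fun r => ENNReal.ofReal (r ^ (-1 - γ))) r
  have hk : Measurable (Function.uncurry k) := by
    have : Function.uncurry k =
        {p : X × ℝ | 1 ≤ p.2 * f p.1}.indicator (fun p => ENNReal.ofReal (p.2 ^ (-1 - γ))) := by
      ext ⟨x, r⟩; rfl
    rw [this]
    exact (by fun_prop : Measurable fun p : X × ℝ => ENNReal.ofReal (p.2 ^ (-1 - γ))).indicator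
      (measurableSet_le measurable_const (measurable_snd.mul (hf.comp measurable_fst)))
  have hk_sec (r : ℝ) : ∫⁻ x, k x r ∂μ = ENNReal.ofReal (r ^ (-1 - γ)) * μ {x | 1 ≤ r * f x} := by
    rw [← lintegral_indicator_const (s := {x | 1 ≤ r * f x})
      (measurableSet_le measurable_const (hf.const_mul r))]
    rfl
  calc ∫⁻ x in S, ENNReal.ofReal (min (f x ^ γ) 1) ∂μ
      ≤ ∫⁻ x in S, (ENNReal.ofReal (ρ ^ (-γ)) + ENNReal.ofReal γ * ∫⁻ r in Ioc 1 ρ, k x r) ∂μ :=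
        setLIntegral_mono' (measurableSet_le measurable_const (measurable_const.mul hf))
          fun x hx => ofReal_min_rpow_one_le hγ hρ hx
    _ = ENNReal.ofReal (ρ ^ (-γ)) * μ S +
          ENNReal.ofReal γ * ∫⁻ r in Ioc 1 ρ, ∫⁻ x in S, k x r ∂μ := by
        rw [lintegral_add_left measurable_const, setLIntegral_const,
          lintegral_const_mul' _ _ ENNReal.ofReal_ne_top, lintegral_lintegral_swap hk.aemeasurable]
    _ ≤ _ := by
        gcongr with r
        exact (setLIntegral_le_lintegral _ _).trans (hk_sec r).le

theorem integrable_min_sq_norm {E : Type*} [NormedAddCommGroup E] [MeasurableSpace E]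
    [OpensMeasurableSpace E] {μ : Measure E}
    (hfin : ∫⁻ u, ENNReal.ofReal (min (‖u‖ ^ 2) 1) ∂μ < ∞) :
    Integrable (fun u : E => min (‖u‖ ^ 2) 1) μ :=
  ⟨by fun_prop, (hasFiniteIntegral_iff_ofReal
    (ae_of_all _ fun u => le_min (by positivity) zero_le_one)).mpr hfin⟩

theorem min_sq_inner_le {E : Type*} [NormedAddCommGroup E] [InnerProductSpace ℝ E] {l : E}
    (hl : ‖l‖ ≤ 1) (r : ℝ) (u : E) :
    min ((r * ⟪l, u⟫) ^ 2) 1 ≤ max (r ^ 2) 1 * min (‖u‖ ^ 2) 1 := by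
  have h_inner : (r * ⟪l, u⟫) ^ 2 ≤ r ^ 2 * ‖u‖ ^ 2 := by
    have := (abs_real_inner_le_norm l u).trans (mul_le_of_le_one_left (norm_nonneg u) hl)
    rw [mul_pow]
    exact mul_le_mul_of_nonneg_left (sq_le_sq' (abs_le.mp this).1 (abs_le.mp this).2)
      (sq_nonneg r)
  rcases le_total (‖u‖ ^ 2) 1 with h | h
  · rw [min_eq_left h]
    exact (min_le_left _ _).trans (h_inner.trans (by gcongr; exact le_max_left _ _))
  · rw [min_eq_right h, mul_one]
    exact (min_le_right _ _).trans (le_max_right _ _)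

theorem one_le_sum_min_sq {ι : Type*} [Fintype ι] {r : ℝ} {u : EuclideanSpace ℝ ι}
    (hu : 1 ≤ r * ‖u‖) : 1 ≤ ∑ i, min ((r * u i) ^ 2) 1 := by
  by_cases h : ∃ i, 1 ≤ (r * u i) ^ 2
  · obtain ⟨i, hi⟩ := h
    calc (1 : ℝ) = min ((r * u i) ^ 2) 1 := (min_eq_right hi).symm
      _ ≤ ∑ i, min ((r * u i) ^ 2) 1 :=
          Finset.single_le_sum (f := fun i => min ((r * u i) ^ 2) 1)
            (fun j _ => le_min (sq_nonneg _) zero_le_one) (Finset.mem_univ i)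
  · push Not at h
    calc (1 : ℝ) ≤ (r * ‖u‖) ^ 2 := one_le_pow₀ hu
      _ = ∑ i, min ((r * u i) ^ 2) 1 := by
        rw [Finset.sum_congr rfl fun i _ => min_eq_left (h i).le, mul_pow,
          EuclideanSpace.norm_sq_eq, Finset.mul_sum]
        simp [mul_pow]

section QStar

variable {E : Type*} [NormedAddCommGroup E] [InnerProductSpace ℝ E] [MeasurableSpace E]

noncomputable def qStar (μ : Measure E) (r : ℝ) : ℝ :=
  ⨆ l : {l : E // ‖l‖ = 1}, ∫ u, min ((r * ⟪(l : E), u⟫) ^ 2) 1 ∂μ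

theorem qStar_nonneg (μ : Measure E) (r : ℝ) : 0 ≤ qStar μ r :=
  Real.iSup_nonneg fun _ => integral_nonneg fun _ => le_min (sq_nonneg _) zero_le_one

variable [OpensMeasurableSpace E] {μ : Measure E}

theorem integrable_min_sq_inner
    (hfin : ∫⁻ u, ENNReal.ofReal (min (‖u‖ ^ 2) 1) ∂μ < ∞) {l : E} (hl : ‖l‖ ≤ 1) (r : ℝ) :
    Integrable (fun u => min ((r * ⟪l, u⟫) ^ 2) 1) μ := by
  refine ((integrable_min_sq_norm hfin).const_mul (max (r ^ 2) 1)).mono' (by fun_prop)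
    (ae_of_all _ fun u => ?_)
  rw [norm_of_nonneg (le_min (sq_nonneg _) zero_le_one)]
  exact min_sq_inner_le hl r u

theorem bddAbove_range_integral_min_sq_inner
    (hfin : ∫⁻ u, ENNReal.ofReal (min (‖u‖ ^ 2) 1) ∂μ < ∞) (r : ℝ) :
    BddAbove (range fun l : {l : E // ‖l‖ = 1} => ∫ u, min ((r * ⟪(l : E), u⟫) ^ 2) 1 ∂μ) := by
  refine ⟨∫ u, max (r ^ 2) 1 * min (‖u‖ ^ 2) 1 ∂μ, ?_⟩
  rintro _ ⟨l, rfl⟩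
  exact integral_mono (integrable_min_sq_inner hfin l.2.le r)
    ((integrable_min_sq_norm hfin).const_mul _) fun u => min_sq_inner_le l.2.le r u

theorem integral_min_sq_inner_le_qStar (hfin : ∫⁻ u, ENNReal.ofReal (min (‖u‖ ^ 2) 1) ∂μ < ∞)
    {l : E} (hl : ‖l‖ = 1) (r : ℝ) : ∫ u, min ((r * ⟪l, u⟫) ^ 2) 1 ∂μ ≤ qStar μ r :=
  le_ciSup (bddAbove_range_integral_min_sq_inner hfin r) ⟨l, hl⟩

theorem qStar_mono (hfin : ∫⁻ u, ENNReal.ofReal (min (‖u‖ ^ 2) 1) ∂μ < ∞) {r s : ℝ}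
    (hr : 0 ≤ r) (hrs : r ≤ s) : qStar μ r ≤ qStar μ s := by
  refine ciSup_mono (bddAbove_range_integral_min_sq_inner hfin s) fun l =>
    integral_mono (integrable_min_sq_inner hfin l.2.le r) (integrable_min_sq_inner hfin l.2.le s)
      fun u => min_le_min_right 1 ?_
  rw [mul_pow, mul_pow]
  gcongr

end QStar

section Euclidean

variable {ι : Type*} [Fintype ι] {μ : Measure (EuclideanSpace ℝ ι)}

theorem measure_one_le_mul_norm_le_card_mul_qStar
    (hfin : ∫⁻ u, ENNReal.ofReal (min (‖u‖ ^ 2) 1) ∂μ < ∞) (r : ℝ) :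
    μ {u | 1 ≤ r * ‖u‖} ≤ Fintype.card ι * ENNReal.ofReal (qStar μ r) := by
  classical
  have h_coord (i : ι) (u : EuclideanSpace ℝ ι) :
      r * u i = r * ⟪EuclideanSpace.single i (1 : ℝ), u⟫ := by
    rw [EuclideanSpace.inner_single_left]; simp
  have h_unit (i : ι) : ‖EuclideanSpace.single i (1 : ℝ)‖ = 1 := by simp
  set g := fun u : EuclideanSpace ℝ ι => ∑ i, ENNReal.ofReal (min ((r * u i) ^ 2) 1)
  calc μ {u | 1 ≤ r * ‖u‖} ≤ μ {u | 1 ≤ g u} := by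
        refine measure_mono fun u hu => ?_
        simp only [g, ← ENNReal.ofReal_sum_of_nonneg
          (fun i _ => le_min (sq_nonneg _) zero_le_one)]
        exact ENNReal.one_le_ofReal.mpr (one_le_sum_min_sq hu)
    _ ≤ ∫⁻ u, g u ∂μ := by
        simpa using mul_meas_ge_le_lintegral₀ (by fun_prop) 1
    _ = ∑ i, ENNReal.ofReal
          (∫ u, min ((r * ⟪EuclideanSpace.single i (1 : ℝ), u⟫) ^ 2) 1 ∂μ) := by
        rw [lintegral_finsetSum' _ fun i _ => by fun_prop]
        refine Finset.sum_congr rfl fun i _ => ?_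
        simp_rw [h_coord i]
        exact (ofReal_integral_eq_lintegral_ofReal (integrable_min_sq_inner hfin (h_unit i).le r)
          (ae_of_all _ fun _ => le_min (sq_nonneg _) zero_le_one)).symm
    _ ≤ ∑ _i : ι, ENNReal.ofReal (qStar μ r) := by
        gcongr with i
        exact integral_min_sq_inner_le_qStar hfin (h_unit i) r
    _ = Fintype.card ι * ENNReal.ofReal (qStar μ r) := by simp

theorem intervalIntegrable_qStar_div_rpow
    (hfin : ∫⁻ u, ENNReal.ofReal (min (‖u‖ ^ 2) 1) ∂μ < ∞) {γ ρ : ℝ} (hρ : 1 ≤ ρ) :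
    IntervalIntegrable (fun r => qStar μ r / r ^ (1 + γ)) volume 1 ρ := by
  simp_rw [div_eq_mul_inv]
  refine IntervalIntegrable.mul_continuousOn ?_ ?_
  · refine MonotoneOn.intervalIntegrable fun r hr s hs hrs => qStar_mono hfin ?_ hrs
    rw [uIcc_of_le hρ] at hr
    linarith [hr.1]
  · rw [uIcc_of_le hρ]
    have hpos : ∀ r ∈ Icc 1 ρ, 0 < r := fun r hr => by linarith [hr.1]
    exact (continuousOn_id.rpow_const fun r hr => Or.inl (hpos r hr).ne').inv₀
      fun r hr => (rpow_pos_of_pos (hpos r hr) _).ne'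

theorem setIntegral_min_rpow_one_le_qStar
    (hfin : ∫⁻ u, ENNReal.ofReal (min (‖u‖ ^ 2) 1) ∂μ < ∞) {γ ρ : ℝ} (hγ : 0 < γ) (hρ : 1 ≤ ρ) :
    ∫ u in {u | 1 ≤ ρ * ‖u‖}, min (‖u‖ ^ γ) 1 ∂μ ≤
      Fintype.card ι * (ρ ^ (-γ) * qStar μ ρ + γ * ∫ r in (1 : ℝ)..ρ, qStar μ r / r ^ (1 + γ)) := by
  set I := ∫ r in (1 : ℝ)..ρ, qStar μ r / r ^ (1 + γ)
  have h_nonneg : ∀ r ∈ Icc 1 ρ, 0 ≤ qStar μ r / r ^ (1 + γ) := fun r hr =>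
    div_nonneg (qStar_nonneg μ r) (rpow_nonneg (by linarith [hr.1]) _)
  have hI : 0 ≤ I := intervalIntegral.integral_nonneg hρ h_nonneg
  have h_radial : ∫⁻ r in Ioc 1 ρ, ENNReal.ofReal (r ^ (-1 - γ)) * μ {u | 1 ≤ r * ‖u‖} ≤
      Fintype.card ι * ENNReal.ofReal I := by
    calc ∫⁻ r in Ioc 1 ρ, ENNReal.ofReal (r ^ (-1 - γ)) * μ {u | 1 ≤ r * ‖u‖}
        ≤ ∫⁻ r in Ioc 1 ρ, Fintype.card ι * ENNReal.ofReal (qStar μ r / r ^ (1 + γ)) := by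
          refine setLIntegral_mono' measurableSet_Ioc fun r hr => ?_
          have hr0 : 0 < r := by linarith [hr.1]
          calc ENNReal.ofReal (r ^ (-1 - γ)) * μ {u | 1 ≤ r * ‖u‖}
              ≤ ENNReal.ofReal (r ^ (-1 - γ)) *
                  (Fintype.card ι * ENNReal.ofReal (qStar μ r)) := by
                gcongr; exact measure_one_le_mul_norm_le_card_mul_qStar hfin r
            _ = _ := by
                rw [mul_left_comm, ← ENNReal.ofReal_mul (rpow_nonneg hr0.le _),
                  show -1 - γ = -(1 + γ) by ring, rpow_neg hr0.le, inv_mul_eq_div]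
      _ = Fintype.card ι * ENNReal.ofReal I := by
          rw [lintegral_const_mul' _ _ (ENNReal.natCast_ne_top _),
            ← ofReal_integral_eq_lintegral_ofReal ((intervalIntegrable_qStar_div_rpow hfin hρ).1)
              ((ae_restrict_iff' measurableSet_Ioc).mpr
                (ae_of_all _ fun r hr => h_nonneg r (Ioc_subset_Icc_self hr))),
            ← intervalIntegral.integral_of_le hρ]
  rw [integral_eq_lintegral_of_nonneg_ae
    (ae_of_all _ fun u => le_min (by positivity) zero_le_one) (by fun_prop (disch := exact hγ.le))]
  refine ENNReal.toReal_le_of_le_ofReal (by positivity [qStar_nonneg μ ρ]) ?_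
  calc ∫⁻ u in {u | 1 ≤ ρ * ‖u‖}, ENNReal.ofReal (min (‖u‖ ^ γ) 1) ∂μ
      ≤ ENNReal.ofReal (ρ ^ (-γ)) * (Fintype.card ι * ENNReal.ofReal (qStar μ ρ)) +
          ENNReal.ofReal γ * (Fintype.card ι * ENNReal.ofReal I) := by
        refine (setLIntegral_min_rpow_one_le μ measurable_norm hγ hρ).trans ?_
        gcongr
        exact measure_one_le_mul_norm_le_card_mul_qStar hfin ρ
    _ = _ := by
        rw [← ENNReal.ofReal_natCast, ← ENNReal.ofReal_mul (by positivity),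
          ← ENNReal.ofReal_mul (by positivity), ← ENNReal.ofReal_mul (by positivity),
          ← ENNReal.ofReal_mul hγ.le,
          ← ENNReal.ofReal_add (by positivity [qStar_nonneg μ ρ]) (by positivity)]
        congr 1
        ring

end Euclidean

theorem stmt8_general {n : ℕ} (γ α K M c : ℝ)
    (hγ0 : 0 < γ) (hK : 0 < K) :
    ∃ C > 0, ∀ (μ : Measure (EuclideanSpace ℝ (Fin n))) (t ρt : ℝ)
      (qstar : ℝ → ℝ),
      μ {0} = 0 →
      (∫⁻ u, ENNReal.ofReal (min (‖u‖ ^ 2) 1) ∂μ) < ∞ →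
      (∀ r : ℝ, qstar r = ⨆ l : {l : EuclideanSpace ℝ (Fin n) // ‖l‖ = 1},
          ∫ u, min ((r * ⟪(l : EuclideanSpace ℝ (Fin n)), u⟫) ^ 2) 1 ∂μ) →
      0 < t → t ≤ 1 → 1 ≤ ρt →
      t * qstar ρt = 1 →
      (∫ r in (1 : ℝ)..ρt, qstar r / r ^ (1 + γ)) ≤ K * qstar ρt / ρt ^ γ →
      μ {u | 1 ≤ ‖u‖} ≤ ENNReal.ofReal M →
      ρt ≤ c * t ^ (-(1 / α)) →
      t * ρt ^ γ * ∫ u in {u | 1 ≤ ρt * ‖u‖}, min (‖u‖ ^ γ) 1 ∂μ ≤ C := by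
  refine ⟨n * (1 + γ * K) + 1, by positivity, ?_⟩
  intro μ t ρt qstar _ hfin hq ht _ hρ htq hKint _ _
  obtain rfl : qstar = qStar μ := funext hq
  have hρ0 : 0 < ρt := by linarith
  have hbound := setIntegral_min_rpow_one_le_qStar hfin hγ0 hρ
  rw [Fintype.card_fin] at hbound
  calc t * ρt ^ γ * ∫ u in {u | 1 ≤ ρt * ‖u‖}, min (‖u‖ ^ γ) 1 ∂μ
      ≤ t * ρt ^ γ * (n * (ρt ^ (-γ) * qStar μ ρt + γ * (K * qStar μ ρt / ρt ^ γ))) := by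
        gcongr
        exact hbound.trans (by gcongr)
    _ = n * (1 + γ * K) * (t * qStar μ ρt) := by
        rw [rpow_neg hρ0.le]
        field_simp
    _ ≤ n * (1 + γ * K) + 1 := by rw [htq]; linarith

/-- Let `μ` be a Lévy measure on `ℝⁿ`, `t ∈ (0,1]`, `0 < γ < α`, `ρ_t ≥ 1`
with `t q*(ρ_t) = 1`, where `q*(r) = sup_{‖l‖=1} ∫ ((r⟪l,u⟫)² ∧ 1) dμ`. If
`∫_1^{ρ_t} q*(r)/r^{1+γ} dr ≤ K q*(ρ_t)/ρ_t^γ`, `μ{‖u‖ ≥ 1} ≤ M` and `ρ_t ≤ c t^{-1/α}`,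
then `t ρ_t^γ ∫_{ρ_t‖u‖ ≥ 1} (‖u‖^γ ∧ 1) μ(du) ≤ C` with `C = C(γ,K,M,c,α)` uniform in
`t ∈ (0,1]`. -/
theorem stmt8 {n : ℕ} (hn : 0 < n) (γ α K M c : ℝ)
    (hγ0 : 0 < γ) (hγα : γ < α) (hα : 0 < α) (hK : 0 < K) (hM : 0 < M) (hc : 0 < c) :
    ∃ C > 0, ∀ (μ : Measure (EuclideanSpace ℝ (Fin n))) (t ρt : ℝ)
      (qstar : ℝ → ℝ),
      μ {0} = 0 →
      (∫⁻ u, ENNReal.ofReal (min (‖u‖ ^ 2) 1) ∂μ) < ∞ →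
      (∀ r : ℝ, qstar r = ⨆ l : {l : EuclideanSpace ℝ (Fin n) // ‖l‖ = 1},
          ∫ u, min ((r * ⟪(l : EuclideanSpace ℝ (Fin n)), u⟫) ^ 2) 1 ∂μ) →
      0 < t → t ≤ 1 → 1 ≤ ρt →
      t * qstar ρt = 1 →
      (∫ r in (1 : ℝ)..ρt, qstar r / r ^ (1 + γ)) ≤ K * qstar ρt / ρt ^ γ →
      μ {u | 1 ≤ ‖u‖} ≤ ENNReal.ofReal M →
      ρt ≤ c * t ^ (-(1 / α)) →
      t * ρt ^ γ * ∫ u in {u | 1 ≤ ρt * ‖u‖}, min (‖u‖ ^ γ) 1 ∂μ ≤ C :=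
  stmt8_general γ α K M c hγ0 hK
end

section
/- Let f_upper(x) = a₃ e^{−a₄‖x‖} on ℝⁿ with a₃, a₄ > 0, let 0 < ρ_s ≤ ρ_t (scaling factors with ρ monotone decreasing in time, s ∈ (0, t]), and let θ ∈ [0,1), ε ∈ (0,1). Then for all x, y ∈ ℝⁿ: ∫_{ℝⁿ} ρ_{t}^n ρ_s^n f_upper((x−z)ρ_{t})^{1−θ} f_upper((z−y)ρ_s)^{1−θ} dz ≤ M · e^{−a₄ ε(1−θ)‖x−y‖ρ_s} · ρ_t^n, where M depends only on n, a₃, a₄, θ, ε, and the ratio bound ρ_t/ρ_s is not needed since the sub-convolution of exponentials is bounded using the triangle inequality ‖x−z‖ρ_t + ‖z−y‖ρ_s ≥ ‖x−y‖ρ_s. -/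
/-!
Write `c = a₄ (1 - θ)`, so the integrand is `a₃^{2(1-θ)} ρ_t^n ρ_s^n e^{-c‖ρ_t(x-z)‖} e^{-c‖ρ_s(z-y)‖}`.
Since `ρ_s ≤ ρ_t`, the triangle inequality gives `‖ρ_s(x-y)‖ ≤ ‖ρ_t(x-z)‖ + ‖ρ_s(z-y)‖`; spending
the fraction `ε` of the exponent on this bound leaves `e^{-ε c ρ_s ‖x-y‖} e^{-(1-ε) c ‖ρ_s(z-y)‖}`.
The remaining factor `ρ_s^n e^{-(1-ε) c ‖ρ_s(z-y)‖}` has the same integral for every `ρ_s` and `y`,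
namely that of `e^{-(1-ε) c ‖z‖}`, which is finite because `e^{-bt}` decays faster than any power
of `1 + t`.
-/

open MeasureTheory Real

open Nat in
theorem exp_neg_mul_le_mul_one_add_rpow_neg {b t : ℝ} (hb : 0 < b) (ht : 0 ≤ t) (k : ℕ) :
    exp (-(b * t)) ≤ exp b * k ! / b ^ k * (1 + t) ^ (-(k : ℝ)) := by
  have h1t : 0 < 1 + t := by linarith
  calc exp (-(b * t)) = exp b / exp (b * (1 + t)) := by
        rw [← exp_sub]; ring_nf
    _ ≤ exp b / ((b * (1 + t)) ^ k / k !) :=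
        div_le_div_of_nonneg_left (exp_pos b).le (by positivity)
          (pow_div_factorial_le_exp _ (by positivity) k)
    _ = exp b * k ! / b ^ k * (1 + t) ^ (-(k : ℝ)) := by
        rw [rpow_neg h1t.le, rpow_natCast, mul_pow]; field_simp

theorem norm_smul_sub_le_norm_smul_sub_add {E : Type*} [SeminormedAddCommGroup E]
    [NormedSpace ℝ E] {ρs ρt : ℝ} (hρs : 0 ≤ ρs) (hρ : ρs ≤ ρt) (x y z : E) :
    ‖ρs • (x - y)‖ ≤ ‖ρt • (x - z)‖ + ‖ρs • (z - y)‖ := by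
  calc ‖ρs • (x - y)‖ ≤ ‖ρs • (x - z)‖ + ‖ρs • (z - y)‖ := by
        rw [← sub_add_sub_cancel x z y, smul_add]; exact norm_add_le _ _
    _ ≤ ‖ρt • (x - z)‖ + ‖ρs • (z - y)‖ := by
        simp only [norm_smul, norm_of_nonneg hρs, norm_of_nonneg (hρs.trans hρ)]
        gcongr

theorem exp_neg_mul_mul_exp_neg_mul_le {c u v w ε : ℝ} (hw : w ≤ u + v) (hc : 0 ≤ c)
    (hu : 0 ≤ u) (hε0 : 0 ≤ ε) (hε1 : ε ≤ 1) :
    exp (-(c * u)) * exp (-(c * v)) ≤ exp (-(ε * c * w)) * exp (-((1 - ε) * c * v)) := by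
  rw [← exp_add, ← exp_add, exp_le_exp]
  nlinarith [mul_nonneg (mul_nonneg hc hε0) (sub_nonneg.mpr hw),
    mul_nonneg (mul_nonneg hc (sub_nonneg.mpr hε1)) hu]

section Convolution

variable {E : Type*} [NormedAddCommGroup E] [NormedSpace ℝ E] [FiniteDimensional ℝ E]
  [MeasurableSpace E] [BorelSpace E] (μ : Measure E) [μ.IsAddHaarMeasure]

local notation "d" => Module.finrank ℝ E

theorem integrable_exp_neg_mul_norm {b : ℝ} (hb : 0 < b) :
    Integrable (fun x : E ↦ exp (-(b * ‖x‖))) μ := by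
  have hr : (d : ℝ) < (d + 1 : ℕ) := by push_cast; linarith
  refine ((integrable_one_add_norm hr).const_mul (exp b * (d + 1).factorial / b ^ (d + 1))).mono'
    (by fun_prop) (.of_forall fun x ↦ ?_)
  rw [norm_of_nonneg (exp_pos _).le]
  exact exp_neg_mul_le_mul_one_add_rpow_neg hb (norm_nonneg x) _

theorem integral_exp_neg_mul_norm_pos {b : ℝ} (hb : 0 < b) :
    0 < ∫ x : E, exp (-(b * ‖x‖)) ∂μ :=
  integral_exp_pos (integrable_exp_neg_mul_norm μ hb)

variable {F : Type*} [NormedAddCommGroup F]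

theorem integrable_comp_smul_sub {ρ : ℝ} (hρ : ρ ≠ 0) {g : E → F} (hg : Integrable g μ) (y : E) :
    Integrable (fun z ↦ g (ρ • (z - y))) μ :=
  ((integrable_comp_smul_iff μ g hρ).mpr hg).comp_sub_right y

theorem smul_integral_comp_smul_sub [NormedSpace ℝ F] {ρ : ℝ} (hρ : 0 < ρ) (g : E → F) (y : E) :
    ρ ^ d • ∫ z, g (ρ • (z - y)) ∂μ = ∫ z, g z ∂μ := by
  rw [integral_sub_right_eq_self (fun z ↦ g (ρ • z)) y,
    Measure.integral_comp_smul_of_nonneg μ g ρ (hR := hρ.le), smul_inv_smul₀ (by positivity)]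

theorem integral_exp_kernel_mul_exp_kernel_le {c ε ρs ρt : ℝ} (hc : 0 < c) (hε0 : 0 ≤ ε)
    (hε1 : ε < 1) (hρs : 0 < ρs) (hρ : ρs ≤ ρt) (x y : E) :
    ∫ z, ρt ^ d * ρs ^ d * exp (-(c * ‖ρt • (x - z)‖)) * exp (-(c * ‖ρs • (z - y)‖)) ∂μ
      ≤ (∫ z, exp (-((1 - ε) * c * ‖z‖)) ∂μ) * exp (-(ε * c * ‖ρs • (x - y)‖)) * ρt ^ d := by
  have hρt : 0 < ρt := hρs.trans_le hρ
  set g : E → ℝ := fun z ↦ exp (-((1 - ε) * c * ‖z‖))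
  have hg : Integrable g μ := integrable_exp_neg_mul_norm μ (by nlinarith)
  have hbound : ∀ z, ρt ^ d * ρs ^ d * exp (-(c * ‖ρt • (x - z)‖)) * exp (-(c * ‖ρs • (z - y)‖))
      ≤ ρt ^ d * exp (-(ε * c * ‖ρs • (x - y)‖)) * (ρs ^ d * g (ρs • (z - y))) := by
    intro z
    have hexp := exp_neg_mul_mul_exp_neg_mul_le
      (norm_smul_sub_le_norm_smul_sub_add hρs.le hρ x y z) hc.le (norm_nonneg _) hε0 hε1.le
    calc _ = ρt ^ d * ρs ^ d * (exp (-(c * ‖ρt • (x - z)‖)) * exp (-(c * ‖ρs • (z - y)‖))) := by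
          ring
      _ ≤ ρt ^ d * ρs ^ d * (exp (-(ε * c * ‖ρs • (x - y)‖)) *
            exp (-((1 - ε) * c * ‖ρs • (z - y)‖))) := by gcongr
      _ = _ := by ring
  calc _ ≤ ∫ z, ρt ^ d * exp (-(ε * c * ‖ρs • (x - y)‖)) * (ρs ^ d * g (ρs • (z - y))) ∂μ :=
        integral_mono_of_nonneg (.of_forall fun z ↦ by positivity)
          (((integrable_comp_smul_sub μ hρs.ne' hg y).const_mul _).const_mul _)
          (.of_forall hbound)
    _ = ρt ^ d * exp (-(ε * c * ‖ρs • (x - y)‖)) * ∫ z, g z ∂μ := by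
        rw [integral_const_mul, integral_const_mul, ← smul_eq_mul (ρs ^ d),
          smul_integral_comp_smul_sub μ hρs]
    _ = _ := by ring

end Convolution

theorem stmt10_general {n : ℕ} (a₃ a₄ θ ε : ℝ) (ha₃ : 0 < a₃) (ha₄ : 0 < a₄)
    (hθ1 : θ < 1) (hε0 : 0 < ε) (hε1 : ε < 1) :
    ∃ M > 0, ∀ (ρs ρt : ℝ), 0 < ρs → ρs ≤ ρt →
      ∀ x y : EuclideanSpace ℝ (Fin n),
        (∫ z : EuclideanSpace ℝ (Fin n),
            ρt ^ n * ρs ^ n *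
              (a₃ * Real.exp (-(a₄ * ‖ρt • (x - z)‖))) ^ (1 - θ) *
              (a₃ * Real.exp (-(a₄ * ‖ρs • (z - y)‖))) ^ (1 - θ))
          ≤ M * Real.exp (-(a₄ * ε * (1 - θ) * (‖x - y‖ * ρs))) * ρt ^ n := by
  have hc : 0 < a₄ * (1 - θ) := mul_pos ha₄ (sub_pos.mpr hθ1)
  have hkernel : ∀ r : ℝ,
      (a₃ * exp (-(a₄ * r))) ^ (1 - θ) = a₃ ^ (1 - θ) * exp (-(a₄ * (1 - θ) * r)) :=
    fun r ↦ by rw [mul_rpow ha₃.le (exp_pos _).le, ← exp_mul]; ring_nf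
  refine ⟨a₃ ^ (1 - θ) * a₃ ^ (1 - θ) *
      ∫ z : EuclideanSpace ℝ (Fin n), exp (-((1 - ε) * (a₄ * (1 - θ)) * ‖z‖)),
    mul_pos (by positivity) (integral_exp_neg_mul_norm_pos _ (by nlinarith)),
    fun ρs ρt hρs hρ x y ↦ ?_⟩
  have hconv := integral_exp_kernel_mul_exp_kernel_le volume hc hε0.le hε1 hρs hρ x y
  rw [finrank_euclideanSpace_fin] at hconv
  calc _ = a₃ ^ (1 - θ) * a₃ ^ (1 - θ) * ∫ z : EuclideanSpace ℝ (Fin n),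
          ρt ^ n * ρs ^ n * exp (-(a₄ * (1 - θ) * ‖ρt • (x - z)‖)) *
            exp (-(a₄ * (1 - θ) * ‖ρs • (z - y)‖)) := by
        rw [← integral_const_mul]
        congr 1 with z
        rw [hkernel, hkernel]
        ring
    _ ≤ _ := mul_le_mul_of_nonneg_left hconv (by positivity)
    _ = _ := by rw [norm_smul, norm_of_nonneg hρs.le]; ring_nf

/-- For `f_upper(x) = a₃ e^{-a₄‖x‖}` on `ℝⁿ`, scales `0 < ρ_s ≤ ρ_t`,
`θ ∈ [0,1)`, `ε ∈ (0,1)`, there is `M = M(n,a₃,a₄,θ,ε)` such that for all `x, y`: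
`∫ ρ_t^n ρ_s^n f_upper((x-z)ρ_t)^{1-θ} f_upper((z-y)ρ_s)^{1-θ} dz
  ≤ M e^{-a₄ ε (1-θ) ‖x-y‖ ρ_s} ρ_t^n`. -/
theorem stmt10 {n : ℕ} (a₃ a₄ θ ε : ℝ) (ha₃ : 0 < a₃) (ha₄ : 0 < a₄)
    (hθ0 : 0 ≤ θ) (hθ1 : θ < 1) (hε0 : 0 < ε) (hε1 : ε < 1) :
    ∃ M > 0, ∀ (ρs ρt : ℝ), 0 < ρs → ρs ≤ ρt →
      ∀ x y : EuclideanSpace ℝ (Fin n),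
        (∫ z : EuclideanSpace ℝ (Fin n),
            ρt ^ n * ρs ^ n *
              (a₃ * Real.exp (-(a₄ * ‖ρt • (x - z)‖))) ^ (1 - θ) *
              (a₃ * Real.exp (-(a₄ * ‖ρs • (z - y)‖))) ^ (1 - θ))
          ≤ M * Real.exp (-(a₄ * ε * (1 - θ) * (‖x - y‖ * ρs))) * ρt ^ n :=
  stmt10_general a₃ a₄ θ ε ha₃ ha₄ hθ1 hε0 hε1
end

section
/- Let q*: [1,∞) → (0,∞) be nondecreasing with q*(r) ≥ c r^α for r ≥ 1 (c > 0, α > 0). Define U(r) = ∫_1^{1/r} s^{n−1}/q*(s) ds for r ∈ (0,1]. If a finite Borel measure ϖ on ℝⁿ satisfies sup_x ϖ{y : ‖x−y‖ ≤ r} ≤ C r^d for all r ∈ (0,1] with d > n − α, then sup_x ∫_{‖y−x‖ ≤ 1} U(‖y−x‖) ϖ(dy) < ∞. -/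
/-!
Since `q*(s) ≥ c s^α`, `U(r) ≤ c⁻¹ ∫_1^{1/r} s^{γ-1} ds = c⁻¹ (r^{-γ} - 1)/γ` for every
`γ ≠ 0` with `γ ≥ n - α`. If `d ≤ 0`, then `α > n` and `γ = n - α < 0` shows that `U` is bounded.
If `d > 0`, take `max 0 (n - α) < γ < d`, so that `U(r) ≲ r^{-γ}`; on the dyadic annulus
`2^{-k-1} < ‖y - x‖ ≤ 2^{-k}`, of `ϖ`-mass at most `C 2^{-kd}`, the integrand is `≲ 2^{(k+1)γ}`,
and the contributions form a geometric series of ratio `2^{γ-d} < 1`.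
-/

open MeasureTheory Real Metric

section PowerLowerBound

variable {q : ℝ → ℝ} {c α : ℝ}

lemma pow_div_nonneg_of_rpow_le (hc : 0 < c) (hlow : ∀ s, 1 ≤ s → c * s ^ α ≤ q s)
    (m : ℕ) {s : ℝ} (hs : 1 ≤ s) : 0 ≤ s ^ m / q s :=
  div_nonneg (pow_nonneg (zero_le_one.trans hs) m)
    ((mul_pos hc (rpow_pos_of_pos (zero_lt_one.trans_le hs) α)).le.trans (hlow s hs))

lemma pow_div_le_of_rpow_le (hc : 0 < c) (hlow : ∀ s, 1 ≤ s → c * s ^ α ≤ q s)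
    {m : ℕ} {γ : ℝ} (hγ : (m : ℝ) + 1 - α ≤ γ) {s : ℝ} (hs : 1 ≤ s) :
    s ^ m / q s ≤ c⁻¹ * s ^ (γ - 1) := by
  have hs0 : 0 < s := zero_lt_one.trans_le hs
  calc s ^ m / q s ≤ s ^ (m : ℝ) / (c * s ^ α) := by
        rw [rpow_natCast]
        exact div_le_div_of_nonneg_left (by positivity) (by positivity) (hlow s hs)
    _ = c⁻¹ * s ^ ((m : ℝ) + 1 - α - 1) := by
        rw [show (m : ℝ) + 1 - α - 1 = m - α by ring, rpow_sub hs0]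
        field_simp
    _ ≤ c⁻¹ * s ^ (γ - 1) := by gcongr

lemma norm_integral_pow_div_le (hc : 0 < c) (hlow : ∀ s, 1 ≤ s → c * s ^ α ≤ q s)
    {m : ℕ} {γ : ℝ} (hγ0 : γ ≠ 0) (hγ : (m : ℝ) + 1 - α ≤ γ) {T : ℝ} (hT : 1 ≤ T) :
    ‖∫ s in (1 : ℝ)..T, s ^ m / q s‖ ≤ c⁻¹ * ((T ^ γ - 1) / γ) := by
  have hint : ∫ s in (1 : ℝ)..T, s ^ (γ - 1) = (T ^ γ - 1) / γ := by
    have h0 : (0 : ℝ) ∉ Set.uIcc 1 T := by simp [Set.uIcc_of_le hT]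
    rw [integral_rpow (Or.inr ⟨by simpa using hγ0, h0⟩), sub_add_cancel, one_rpow]
  rw [← hint, ← intervalIntegral.integral_const_mul, Real.norm_of_nonneg
    (intervalIntegral.integral_nonneg hT fun s hs => pow_div_nonneg_of_rpow_le hc hlow m hs.1)]
  -- `q` is not assumed measurable, so the integral may be the junk value `0`.
  by_cases hf : IntervalIntegrable (fun s => s ^ m / q s) volume 1 T
  · refine intervalIntegral.integral_mono_on hT hf ?_
      fun s hs => pow_div_le_of_rpow_le hc hlow hγ hs.1
    refine ((continuousOn_id.rpow_const fun s hs => Or.inl ?_).const_smul c⁻¹).intervalIntegrable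
    rw [Set.uIcc_of_le hT] at hs
    exact (zero_lt_one.trans_le hs.1).ne'
  · rw [intervalIntegral.integral_undef hf]
    exact intervalIntegral.integral_nonneg hT fun s hs =>
      (pow_div_nonneg_of_rpow_le hc hlow m hs.1).trans (pow_div_le_of_rpow_le hc hlow hγ hs.1)

lemma norm_integral_one_div_le_rpow_neg (hc : 0 < c) (hlow : ∀ s, 1 ≤ s → c * s ^ α ≤ q s)
    {m : ℕ} {γ : ℝ} (hγ0 : 0 < γ) (hγ : (m : ℝ) + 1 - α ≤ γ) {r : ℝ} (hr0 : 0 < r)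
    (hr1 : r ≤ 1) :
    ‖∫ s in (1 : ℝ)..(1 / r), s ^ m / q s‖ ≤ c⁻¹ * γ⁻¹ * r ^ (-γ) := by
  refine (norm_integral_pow_div_le hc hlow hγ0.ne' hγ (one_le_one_div hr0 hr1)).trans ?_
  rw [rpow_neg_eq_inv_rpow, inv_eq_one_div r, mul_assoc, div_eq_inv_mul]
  gcongr
  linarith

lemma norm_integral_one_div_le_of_neg (hc : 0 < c) (hlow : ∀ s, 1 ≤ s → c * s ^ α ≤ q s)
    {m : ℕ} {γ : ℝ} (hγ0 : γ < 0) (hγ : (m : ℝ) + 1 - α ≤ γ) {r : ℝ} (hr0 : 0 < r)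
    (hr1 : r ≤ 1) :
    ‖∫ s in (1 : ℝ)..(1 / r), s ^ m / q s‖ ≤ c⁻¹ * (-γ)⁻¹ := by
  refine (norm_integral_pow_div_le hc hlow hγ0.ne hγ (one_le_one_div hr0 hr1)).trans ?_
  gcongr
  rw [div_le_iff_of_neg hγ0, inv_neg, neg_mul, inv_mul_cancel₀ hγ0.ne]
  linarith [rpow_nonneg (one_div_pos.2 hr0).le γ]

end PowerLowerBound

section PuncturedBall

variable {X : Type*} [MetricSpace X] [MeasurableSpace X] [OpensMeasurableSpace X]

lemma lintegral_dyadicAnnulus_rpow_neg_dist_le (μ : Measure X) (x : X) {C d γ : ℝ} (hγ : 0 ≤ γ)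
    (hμ : ∀ r, 0 < r → r ≤ 1 → μ (closedBall x r) ≤ ENNReal.ofReal (C * r ^ d)) (k : ℕ) :
    ∫⁻ y in closedBall x ((2⁻¹ : ℝ) ^ k) \ closedBall x ((2⁻¹ : ℝ) ^ (k + 1)),
        ENNReal.ofReal (dist y x ^ (-γ)) ∂μ
      ≤ ENNReal.ofReal (2 ^ γ * C) * ENNReal.ofReal (2 ^ (γ - d)) ^ k := by
  set A := closedBall x ((2⁻¹ : ℝ) ^ k) \ closedBall x ((2⁻¹ : ℝ) ^ (k + 1))
  have hdist : ∀ y ∈ A, ENNReal.ofReal (dist y x ^ (-γ))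
      ≤ ENNReal.ofReal (((2⁻¹ : ℝ) ^ (k + 1)) ^ (-γ)) := fun y hy =>
    ENNReal.ofReal_le_ofReal <| rpow_le_rpow_of_nonpos (by positivity)
      (not_le.1 fun h => hy.2 (mem_closedBall.2 h)).le (neg_nonpos.2 hγ)
  have hmeasure : μ A ≤ ENNReal.ofReal (C * ((2⁻¹ : ℝ) ^ k) ^ d) :=
    (measure_mono Set.sdiff_subset).trans
      (hμ _ (by positivity) (pow_le_one₀ (by norm_num) (by norm_num)))
  have hpowers : ((2⁻¹ : ℝ) ^ (k + 1)) ^ (-γ) * (C * ((2⁻¹ : ℝ) ^ k) ^ d)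
      = 2 ^ γ * C * (2 ^ (γ - d)) ^ k := by
    rw [← rpow_pow_comm (by norm_num), ← rpow_pow_comm (by norm_num), inv_rpow zero_le_two,
      inv_rpow zero_le_two, rpow_neg zero_le_two, inv_inv, rpow_sub zero_lt_two]
    ring
  calc ∫⁻ y in A, ENNReal.ofReal (dist y x ^ (-γ)) ∂μ
      ≤ ∫⁻ _ in A, ENNReal.ofReal (((2⁻¹ : ℝ) ^ (k + 1)) ^ (-γ)) ∂μ :=
        setLIntegral_mono' (measurableSet_closedBall.diff measurableSet_closedBall) hdist
    _ = ENNReal.ofReal (((2⁻¹ : ℝ) ^ (k + 1)) ^ (-γ)) * μ A := setLIntegral_const _ _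
    _ ≤ ENNReal.ofReal (((2⁻¹ : ℝ) ^ (k + 1)) ^ (-γ))
          * ENNReal.ofReal (C * ((2⁻¹ : ℝ) ^ k) ^ d) := by gcongr
    _ = ENNReal.ofReal (2 ^ γ * C) * ENNReal.ofReal (2 ^ (γ - d)) ^ k := by
        rw [← ENNReal.ofReal_mul (by positivity), hpowers,
          ← ENNReal.ofReal_pow (by positivity), ← ENNReal.ofReal_mul' (by positivity)]

lemma lintegral_rpow_neg_dist_le (μ : Measure X) (x : X) {C d γ : ℝ} (hγ : 0 ≤ γ)
    (hμ : ∀ r, 0 < r → r ≤ 1 → μ (closedBall x r) ≤ ENNReal.ofReal (C * r ^ d)) :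
    ∫⁻ y in closedBall x 1 \ {x}, ENNReal.ofReal (dist y x ^ (-γ)) ∂μ
      ≤ ENNReal.ofReal (2 ^ γ * C) * (1 - ENNReal.ofReal (2 ^ (γ - d)))⁻¹ := by
  set A : ℕ → Set X := fun k =>
    closedBall x ((2⁻¹ : ℝ) ^ k) \ closedBall x ((2⁻¹ : ℝ) ^ (k + 1))
  have hcover : closedBall x 1 \ {x} ⊆ ⋃ k, A k := by
    rintro y ⟨hy1, hyx⟩
    obtain ⟨k, hk_lt, hk_le⟩ := exists_nat_pow_near_of_lt_one (dist_pos.2 hyx)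
      (mem_closedBall.1 hy1) (by norm_num : (0 : ℝ) < 2⁻¹) (by norm_num)
    exact Set.mem_iUnion.2 ⟨k, mem_closedBall.2 hk_le, fun h => (mem_closedBall.1 h).not_gt hk_lt⟩
  calc ∫⁻ y in closedBall x 1 \ {x}, ENNReal.ofReal (dist y x ^ (-γ)) ∂μ
      ≤ ∫⁻ y in ⋃ k, A k, ENNReal.ofReal (dist y x ^ (-γ)) ∂μ := lintegral_mono_set hcover
    _ ≤ ∑' k, ∫⁻ y in A k, ENNReal.ofReal (dist y x ^ (-γ)) ∂μ := lintegral_iUnion_le _ _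
    _ ≤ ∑' k : ℕ, ENNReal.ofReal (2 ^ γ * C) * ENNReal.ofReal (2 ^ (γ - d)) ^ k :=
        ENNReal.tsum_le_tsum (lintegral_dyadicAnnulus_rpow_neg_dist_le μ x hγ hμ)
    _ = _ := by rw [ENNReal.tsum_mul_left, ENNReal.tsum_geometric]

lemma exists_lintegral_punctured_closedBall_le_of_le_rpow_neg (μ : Measure X) {g : ℝ → ℝ}
    {K C d γ : ℝ} (hγ : 0 ≤ γ) (hγd : γ < d)
    (hg : ∀ r, 0 < r → r ≤ 1 → ‖g r‖ ≤ K * r ^ (-γ))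
    (hμ : ∀ x r, 0 < r → r ≤ 1 → μ (closedBall x r) ≤ ENNReal.ofReal (C * r ^ d)) :
    ∃ M ≠ ⊤, ∀ x, ∫⁻ y in closedBall x 1 \ {x}, ‖g (dist y x)‖ₑ ∂μ ≤ M := by
  have hratio : ENNReal.ofReal (2 ^ (γ - d)) < 1 :=
    ENNReal.ofReal_lt_one.2 (rpow_lt_one_of_one_lt_of_neg one_lt_two (by linarith))
  have := (tsub_pos_of_lt hratio).ne'
  refine ⟨ENNReal.ofReal K * (ENNReal.ofReal (2 ^ γ * C) * (1 - ENNReal.ofReal (2 ^ (γ - d)))⁻¹),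
    by finiteness, fun x => ?_⟩
  calc ∫⁻ y in closedBall x 1 \ {x}, ‖g (dist y x)‖ₑ ∂μ
      ≤ ∫⁻ y in closedBall x 1 \ {x}, ENNReal.ofReal K * ENNReal.ofReal (dist y x ^ (-γ)) ∂μ := by
        refine setLIntegral_mono' (measurableSet_closedBall.diff (measurableSet_singleton x))
          fun y ⟨hy1, hyx⟩ => ?_
        rw [← ofReal_norm, ← ENNReal.ofReal_mul' (by positivity)]
        exact ENNReal.ofReal_le_ofReal (hg _ (dist_pos.2 hyx) (mem_closedBall.1 hy1))
    _ ≤ _ := by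
        rw [lintegral_const_mul' _ _ ENNReal.ofReal_ne_top]
        gcongr
        exact lintegral_rpow_neg_dist_le μ x hγ (hμ x)

lemma exists_lintegral_punctured_closedBall_le_of_le_const (μ : Measure X) [IsFiniteMeasure μ]
    {g : ℝ → ℝ} {K : ℝ} (hg : ∀ r, 0 < r → r ≤ 1 → ‖g r‖ ≤ K) :
    ∃ M ≠ ⊤, ∀ x, ∫⁻ y in closedBall x 1 \ {x}, ‖g (dist y x)‖ₑ ∂μ ≤ M := by
  refine ⟨ENNReal.ofReal K * μ Set.univ, by finiteness, fun x => ?_⟩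
  calc ∫⁻ y in closedBall x 1 \ {x}, ‖g (dist y x)‖ₑ ∂μ
      ≤ ∫⁻ _ in closedBall x 1 \ {x}, ENNReal.ofReal K ∂μ := by
        refine setLIntegral_mono' (measurableSet_closedBall.diff (measurableSet_singleton x))
          fun y ⟨hy1, hyx⟩ => ?_
        rw [← ofReal_norm]
        exact ENNReal.ofReal_le_ofReal (hg _ (dist_pos.2 hyx) (mem_closedBall.1 hy1))
    _ ≤ _ := by rw [setLIntegral_const]; gcongr; exact Set.subset_univ _

end PuncturedBall

lemma setLIntegral_le_mul_add_diff_singleton {X : Type*} [MeasurableSpace X]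
    [MeasurableSingletonClass X] (μ : Measure X) (f : X → ENNReal) (s : Set X) (x : X) :
    ∫⁻ y in s, f y ∂μ ≤ f x * μ Set.univ + ∫⁻ y in s \ {x}, f y ∂μ :=
  calc ∫⁻ y in s, f y ∂μ ≤ ∫⁻ y in {x} ∪ s \ {x}, f y ∂μ := lintegral_mono_set (by simp)
    _ ≤ ∫⁻ y in {x}, f y ∂μ + ∫⁻ y in s \ {x}, f y ∂μ := lintegral_union_le _ _ _
    _ ≤ _ := by rw [lintegral_singleton]; gcongr; exact Set.subset_univ _

lemma integral_le_toReal_of_lintegral_enorm_le {X : Type*} [MeasurableSpace X] {μ : Measure X}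
    {f : X → ℝ} {M : ENNReal} (hM : M ≠ ⊤) (h : ∫⁻ y, ‖f y‖ₑ ∂μ ≤ M) :
    ∫ y, f y ∂μ ≤ M.toReal :=
  calc ∫ y, f y ∂μ ≤ ‖∫ y, f y ∂μ‖ := le_norm_self _
    _ = ‖∫ y, f y ∂μ‖ₑ.toReal := (toReal_enorm _).symm
    _ ≤ M.toReal := ENNReal.toReal_mono hM ((enorm_integral_le_lintegral_enorm _).trans h)

theorem stmt12_general {n : ℕ} (hn : 1 ≤ n) (qstar : ℝ → ℝ) (c α C d : ℝ)
    (hc : 0 < c) (hd : (n : ℝ) - α < d)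
    (hlow : ∀ r : ℝ, 1 ≤ r → c * r ^ α ≤ qstar r)
    (ϖ : Measure (EuclideanSpace ℝ (Fin n))) [IsFiniteMeasure ϖ]
    (hϖ : ∀ (x : EuclideanSpace ℝ (Fin n)) (r : ℝ), 0 < r → r ≤ 1 →
      (ϖ (Metric.closedBall x r)).toReal ≤ C * r ^ d) :
    ∃ B : ℝ, ∀ x : EuclideanSpace ℝ (Fin n),
      (∫ y in {y | ‖y - x‖ ≤ 1},
          (∫ s in (1 : ℝ)..(1 / ‖y - x‖), s ^ (n - 1) / qstar s) ∂ϖ) ≤ B := by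
  set U : ℝ → ℝ := fun r => ∫ s in (1 : ℝ)..(1 / r), s ^ (n - 1) / qstar s
  have hexp : ((n - 1 : ℕ) : ℝ) + 1 - α = n - α := by rw [Nat.cast_sub hn]; ring
  obtain ⟨M, hM, hpunctured⟩ : ∃ M ≠ ⊤, ∀ x,
      ∫⁻ y in closedBall x 1 \ {x}, ‖U (dist y x)‖ₑ ∂ϖ ≤ M := by
    rcases le_or_gt d 0 with hd0 | hd0
    · exact exists_lintegral_punctured_closedBall_le_of_le_const ϖ fun r =>
        norm_integral_one_div_le_of_neg hc hlow (by linarith) hexp.le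
    · obtain ⟨γ, hγ_gt, hγd⟩ := exists_between (max_lt hd0 hd)
      have hball : ∀ x r, 0 < r → r ≤ 1 → ϖ (closedBall x r) ≤ ENNReal.ofReal (C * r ^ d) :=
        fun x r hr0 hr1 => (ENNReal.ofReal_toReal (measure_ne_top ϖ _)).symm.trans_le
          (ENNReal.ofReal_le_ofReal (hϖ x r hr0 hr1))
      exact exists_lintegral_punctured_closedBall_le_of_le_rpow_neg ϖ
        ((le_max_left _ _).trans hγ_gt.le) hγd
        (fun r => norm_integral_one_div_le_rpow_neg hc hlow ((le_max_left _ _).trans_lt hγ_gt)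
          (hexp.trans_le ((le_max_right _ _).trans hγ_gt.le))) hball
  -- `U 0` is the junk value `∫ s in 1..0, …`, the same for every centre `x`.
  refine ⟨(‖U 0‖ₑ * ϖ Set.univ + M).toReal, fun x => ?_⟩
  simp_rw [← dist_eq_norm]
  refine integral_le_toReal_of_lintegral_enorm_le (by finiteness) ?_
  refine (setLIntegral_le_mul_add_diff_singleton ϖ _ (closedBall x 1) x).trans ?_
  rw [dist_self]
  gcongr
  exact hpunctured x

/-- Let `q* : [1,∞) → (0,∞)` be nondecreasing with `q*(r) ≥ c r^α` for
`r ≥ 1`, and `U(r) = ∫_1^{1/r} s^{n-1}/q*(s) ds` for `r ∈ (0,1]`. If a finite Borel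
measure `ϖ` on `ℝⁿ` satisfies `sup_x ϖ(B(x,r)) ≤ C r^d` for `r ∈ (0,1]` with
`d > n - α`, then `sup_x ∫_{‖y-x‖≤1} U(‖y-x‖) ϖ(dy) < ∞`. -/
theorem stmt12 {n : ℕ} (hn : 1 ≤ n) (qstar : ℝ → ℝ) (c α C d : ℝ)
    (hc : 0 < c) (hα : 0 < α) (hC : 0 < C) (hd : (n : ℝ) - α < d)
    (hpos : ∀ r : ℝ, 1 ≤ r → 0 < qstar r)
    (hmono : MonotoneOn qstar (Set.Ici (1 : ℝ)))
    (hlow : ∀ r : ℝ, 1 ≤ r → c * r ^ α ≤ qstar r)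
    (ϖ : Measure (EuclideanSpace ℝ (Fin n))) [IsFiniteMeasure ϖ]
    (hϖ : ∀ (x : EuclideanSpace ℝ (Fin n)) (r : ℝ), 0 < r → r ≤ 1 →
      (ϖ (Metric.closedBall x r)).toReal ≤ C * r ^ d) :
    ∃ B : ℝ, ∀ x : EuclideanSpace ℝ (Fin n),
      (∫ y in {y | ‖y - x‖ ≤ 1},
          (∫ s in (1 : ℝ)..(1 / ‖y - x‖), s ^ (n - 1) / qstar s) ∂ϖ) ≤ B :=
  stmt12_general hn qstar c α C d hc hd hlow ϖ hϖ
end
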